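/- Contiguous WZ relation in b: Let a, b be complex numbers with b ≠ 0, 1 + a − b not a nonpositive integer, and a − b not a nonpositive integer. Define M(a,b,k) = (a)_k (b)_k (−1)^k / ((1+a−b)_k k!) and G'(a,b,k) = M(a,b,k) · (a−b+k)k / b. Then for every nonnegative integer k: (a − 2b) M(a,b,k) + (−2a + 2b) M(a,b+1,k) = G'(a,b,k+1) − G'(a,b,k). -/

import Mathlib

open Complex Finset Filter Topology

/-- The Pochhammer symbol `(x)_k = x (x+1) ⋯ (x+k-1)`. -/
noncomputable def poch (x : ℂ) (k : ℕ) : ℂ := (ascPochhammer ℂ k).eval x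

/-- The Kummer summand `M(a,b,k) = (a)_k (b)_k (-1)^k / ((1+a-b)_k k!)`. -/
noncomputable def kummerM (a b : ℂ) (k : ℕ) : ℂ :=
  poch a k * poch b k * (-1 : ℂ) ^ k / (poch (1 + a - b) k * (Nat.factorial k : ℂ))

/-- The certificate function `G'(a,b,k) = M(a,b,k) (a-b+k) k / b`. -/
noncomputable def kummerG' (a b : ℂ) (k : ℕ) : ℂ :=
  kummerM a b k * ((a - b + k) * k / b)

/-!
Both contiguous terms are rational multiples of `M(a,b,k)`: from `x (x+1)_k = (x)_k (x+k)` one gets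
`M(a,b+1,k) = M(a,b,k) (b+k)(a-b+k) / (b(a-b))`, and the term ratio
`M(a,b,k+1)/M(a,b,k) = -(a+k)(b+k) / ((1+a-b+k)(k+1))` has its denominator cancelled by the
certificate factor `(a-b+k+1)(k+1)`, so `G'(a,b,k+1) = -(a+k)(b+k) M(a,b,k) / b`. The relation is
then the polynomial identity `b(a-2b) - 2(b+k)(a-b+k) = -(a+k)(b+k) - k(a-b+k)`.
-/

lemma poch_succ (x : ℂ) (k : ℕ) : poch x (k + 1) = poch x k * (x + k) :=
  ascPochhammer_succ_eval k x

lemma mul_poch_add_one (x : ℂ) (k : ℕ) : x * poch (x + 1) k = poch x k * (x + k) := by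
  rw [← poch_succ]
  simp [poch, ascPochhammer_succ_left, Polynomial.eval_comp]

/-- Unconditional: when `1 + a - b + k = 0` both sides are `0` by the convention `x / 0 = 0`. -/
lemma kummerM_succ (a b : ℂ) (k : ℕ) :
    kummerM a b (k + 1) = kummerM a b k * (-(a + k) * (b + k) / ((1 + a - b + k) * (k + 1))) := by
  simp only [kummerM, poch_succ, pow_succ, Nat.factorial_succ, Nat.cast_mul, Nat.cast_succ]
  rw [div_mul_div_comm]
  congr 1 <;> ring

lemma kummerM_add_one {a b : ℂ} (hb : b ≠ 0) (h : ∀ m : ℕ, a - b ≠ -m) (k : ℕ) :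
    kummerM a (b + 1) k = kummerM a b k * ((b + k) * (a - b + k) / (b * (a - b))) := by
  have hab : a - b ≠ 0 := by simpa using h 0
  have habk : a - b + k ≠ 0 := fun h0 => h k (eq_neg_of_add_eq_zero_left h0)
  have hb1 : poch (b + 1) k = poch b k * (b + k) / b :=
    eq_div_of_mul_eq hb (by rw [mul_comm, mul_poch_add_one])
  have hab1 : poch (a - b) k = (a - b) * poch (a - b + 1) k / (a - b + k) :=
    eq_div_of_mul_eq habk (mul_poch_add_one (a - b) k).symm
  simp only [kummerM, show 1 + a - (b + 1) = a - b by ring, show 1 + a - b = a - b + 1 by ring,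
    hb1, hab1]
  field_simp

lemma kummerG'_succ {a b : ℂ} {k : ℕ} (h : 1 + a - b + k ≠ 0) :
    kummerG' a b (k + 1) = -(a + k) * (b + k) / b * kummerM a b k := by
  rw [kummerG', kummerM_succ]
  push_cast
  field_simp
  ring

theorem kummer_contiguous_WZ_general (a b : ℂ) (hb : b ≠ 0)
    (h2 : ∀ m : ℕ, a - b ≠ -(m : ℂ)) :
    ∀ k : ℕ,
      (a - 2 * b) * kummerM a b k + (-2 * a + 2 * b) * kummerM a (b + 1) k
        = kummerG' a b (k + 1) - kummerG' a b k := by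
  intro k
  have hab : a - b ≠ 0 := by simpa using h2 0
  have hk : 1 + a - b + k ≠ 0 := fun h0 => h2 (k + 1) (by push_cast; linear_combination h0)
  rw [kummerM_add_one hb h2, kummerG'_succ hk, kummerG']
  field_simp
  ring

/-- Contiguous WZ relation in `b`:
`(a-2b) M(a,b,k) + (-2a+2b) M(a,b+1,k) = G'(a,b,k+1) - G'(a,b,k)`. -/
theorem kummer_contiguous_WZ (a b : ℂ) (hb : b ≠ 0)
    (h1 : ∀ m : ℕ, 1 + a - b ≠ -(m : ℂ))
    (h2 : ∀ m : ℕ, a - b ≠ -(m : ℂ)) :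
    ∀ k : ℕ,
      (a - 2 * b) * kummerM a b k + (-2 * a + 2 * b) * kummerM a (b + 1) k
        = kummerG' a b (k + 1) - kummerG' a b k :=
  kummer_contiguous_WZ_general a b hb h2
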